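/- Let Ω ⊂ ℝⁿ be a nonempty open bounded convex set, Λ > 0, and suppose v is a minimizer of J_Λ(u) = Lip(u) + Λ|{u > 0}| over 𝓛₁(Ω) with Lip(v) ≥ 1/R_Ω. Set r̄ := 1/Lip(v). Then the positivity set of v equals D_{r̄} := Ω \ closure(Ω_{r̄}), and J_Λ(v) = 1/r̄ + Λ|D_{r̄}|. -/

import Mathlib

open MeasureTheory Metric Set Filter

noncomputable section

/-- The inner parallel set `Ω_r = {x ∈ Ω : dist(x, ∂Ω) > r}`. -/
def innerParallel {n : ℕ} (Ω : Set (EuclideanSpace ℝ (Fin n))) (r : ℝ) :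
    Set (EuclideanSpace ℝ (Fin n)) :=
  {x ∈ Ω | r < infDist x (frontier Ω)}

/-- The inradius `R_Ω = sup_{x ∈ Ω} dist(x, ∂Ω)`. -/
def inradius {n : ℕ} (Ω : Set (EuclideanSpace ℝ (Fin n))) : ℝ :=
  sSup ((fun x => infDist x (frontier Ω)) '' Ω)

/-- The perimeter of a set: the `(n-1)`-dimensional Hausdorff measure of its boundary. -/
def perim {n : ℕ} (A : Set (EuclideanSpace ℝ (Fin n))) : ℝ :=
  (μH[(n : ℝ) - 1] (frontier A)).toReal

/-- The Lipschitz constant of `u` on the set `s` (the least admissible constant). -/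
def lipOn {n : ℕ} (u : EuclideanSpace ℝ (Fin n) → ℝ)
    (s : Set (EuclideanSpace ℝ (Fin n))) : ℝ :=
  sInf {L : ℝ | 0 ≤ L ∧ ∀ x ∈ s, ∀ y ∈ s, |u x - u y| ≤ L * dist x y}

/-- The admissible class `𝓛₁(Ω)`: nonnegative Lipschitz functions on `Ω̄` with `u = 1`
on `∂Ω`. -/
def admissible {n : ℕ} (Ω : Set (EuclideanSpace ℝ (Fin n))) :
    Set (EuclideanSpace ℝ (Fin n) → ℝ) :=
  {u | (∃ L : ℝ, ∀ x ∈ closure Ω, ∀ y ∈ closure Ω, |u x - u y| ≤ L * dist x y) ∧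
    (∀ x ∈ Ω, 0 ≤ u x) ∧ (∀ x ∈ frontier Ω, u x = 1)}

/-- The functional `J_Λ(u) = Lip(u) + Λ |{u > 0}|`. -/
def Jfun {n : ℕ} (Ω : Set (EuclideanSpace ℝ (Fin n))) (Λ : ℝ)
    (u : EuclideanSpace ℝ (Fin n) → ℝ) : ℝ :=
  lipOn u (closure Ω) + Λ * (volume {x ∈ Ω | 0 < u x}).toReal

/-- The model function `v_r(x) = [1 - dist(x,∂Ω)/r]₊`. -/
def vfun {n : ℕ} (Ω : Set (EuclideanSpace ℝ (Fin n))) (r : ℝ)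
    (x : EuclideanSpace ℝ (Fin n)) : ℝ :=
  max (1 - infDist x (frontier Ω) / r) 0


variable {n : ℕ}

private abbrev EE (n : ℕ) := EuclideanSpace ℝ (Fin n)

private lemma lipOn_le {u : EE n → ℝ} {s : Set (EE n)} {L : ℝ} (hL : 0 ≤ L)
    (h : ∀ x ∈ s, ∀ y ∈ s, |u x - u y| ≤ L * dist x y) : lipOn u s ≤ L :=
  csInf_le ⟨0, fun _ h => h.1⟩ ⟨hL, h⟩

private lemma lipOn_spec {u : EE n → ℝ} {s : Set (EE n)}
    (hne : ∃ L : ℝ, ∀ x ∈ s, ∀ y ∈ s, |u x - u y| ≤ L * dist x y) :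
    0 ≤ lipOn u s ∧ ∀ x ∈ s, ∀ y ∈ s, |u x - u y| ≤ lipOn u s * dist x y := by
  obtain ⟨L₀, hL₀⟩ := hne
  have hSne : {L : ℝ | 0 ≤ L ∧ ∀ x ∈ s, ∀ y ∈ s, |u x - u y| ≤ L * dist x y}.Nonempty := by
    refine ⟨max L₀ 0, le_max_right _ _, fun x hx y hy => (hL₀ x hx y hy).trans ?_⟩
    exact mul_le_mul_of_nonneg_right (le_max_left _ _) dist_nonneg
  have h0 : 0 ≤ lipOn u s := le_csInf hSne fun L hL => hL.1
  refine ⟨h0, fun x hx y hy => ?_⟩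
  rcases eq_or_ne x y with rfl | hxy
  · simp
  · have hd : 0 < dist x y := dist_pos.2 hxy
    have : |u x - u y| / dist x y ≤ lipOn u s :=
      le_csInf hSne fun L hL => (div_le_iff₀ hd).2 (hL.2 x hx y hy)
    calc |u x - u y| = |u x - u y| / dist x y * dist x y := by field_simp
    _ ≤ lipOn u s * dist x y := mul_le_mul_of_nonneg_right this dist_nonneg

private lemma le_infDist' {s : Set (EE n)} (hs : s.Nonempty) {x : EE n} {r : ℝ}
    (h : ∀ y ∈ s, r ≤ dist x y) : r ≤ infDist x s := by
  by_contra hlt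
  rw [not_le, infDist_lt_iff hs] at hlt
  obtain ⟨y, hy, hd⟩ := hlt
  exact hd.not_ge (h y hy)

section geom

variable {Ω : Set (EE n)} (hΩo : IsOpen Ω) (hΩb : Bornology.IsBounded Ω)
  (hΩc : Convex ℝ Ω) (hΩne : Ω.Nonempty) (hn : 2 ≤ n)

include hn hΩb in
private lemma ne_univ' : Ω ≠ univ := by
  intro h
  haveI : Nontrivial (EE n) := by
    refine ⟨EuclideanSpace.single (⟨0, by omega⟩ : Fin n) (1:ℝ), 0, fun hc => ?_⟩
    have := congrArg (fun v : EE n => v ⟨0, by omega⟩) hc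
    simp [EuclideanSpace.single_apply] at this
  exact NormedSpace.unbounded_univ ℝ (EE n) (h ▸ hΩb)

include hn hΩb hΩo hΩne in
private lemma frontier_ne' : (frontier Ω).Nonempty :=
  nonempty_frontier_iff.2 ⟨hΩne, ne_univ' hΩb hn⟩

include hn hΩb hΩo hΩne in
private lemma feq' {x : EE n} (hx : x ∈ Ω) : infDist x (frontier Ω) = infDist x Ωᶜ := by
  refine le_antisymm ?_ ?_
  · obtain ⟨y, hyf, hyd⟩ := exists_mem_frontier_infDist_compl_eq_dist hx (ne_univ' hΩb hn)
    rw [hyd]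
    exact infDist_le_dist_of_mem hyf
  · have h1 : frontier Ω ⊆ closure Ωᶜ := by
      rw [frontier_eq_closure_inter_closure]; exact inter_subset_right
    calc infDist x Ωᶜ = infDist x (closure Ωᶜ) := (infDist_closure).symm
    _ ≤ infDist x (frontier Ω) :=
        infDist_le_infDist_of_subset h1 (frontier_ne' hΩo hΩb hΩne hn)

include hn hΩb hΩo hΩne in
private lemma fpos' {x : EE n} (hx : x ∈ Ω) : 0 < infDist x (frontier Ω) := by
  rw [feq' hΩo hΩb hΩne hn hx]
  have hcne : (Ωᶜ : Set (EE n)).Nonempty := by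
    rw [nonempty_compl]; exact ne_univ' hΩb hn
  exact (hΩo.isClosed_compl.notMem_iff_infDist_pos hcne).1 (by simpa using hx)

include hn hΩb hΩo hΩne in
private lemma ball_subset' {x : EE n} (hx : x ∈ Ω) : ball x (infDist x (frontier Ω)) ⊆ Ω := by
  rw [feq' hΩo hΩb hΩne hn hx]
  exact ball_infDist_compl_subset

include hn hΩb hΩo hΩne hΩc in
private lemma f_concave' {x y : EE n} (hx : x ∈ Ω) (hy : y ∈ Ω) {a b : ℝ}
    (ha : 0 ≤ a) (hb : 0 ≤ b) (hab : a + b = 1) :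
    a * infDist x (frontier Ω) + b * infDist y (frontier Ω) ≤
      infDist (a • x + b • y) (frontier Ω) := by
  set f : EE n → ℝ := fun p => infDist p (frontier Ω) with hf
  rcases ha.eq_or_lt with rfl | ha'
  · have : b = 1 := by linarith
    subst this; simp [hf]
  rcases hb.eq_or_lt with rfl | hb'
  · have : a = 1 := by linarith
    subst this; simp [hf]
  have hfx : 0 < f x := fpos' hΩo hΩb hΩne hn hx
  have hfy : 0 < f y := fpos' hΩo hΩb hΩne hn hy
  set ρ : ℝ := a * f x + b * f y with hρ
  have hρ0 : 0 < ρ := by positivity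
  set z : EE n := a • x + b • y with hz
  have hball : ball z ρ ⊆ Ω := by
    intro w hw
    set d : EE n := w - z with hd
    have hdn : ‖d‖ < ρ := by
      rw [hd, ← dist_eq_norm]; exact mem_ball.1 hw
    have hw1 : x + (f x / ρ) • d ∈ Ω := by
      apply ball_subset' hΩo hΩb hΩne hn hx
      have : dist (x + (f x / ρ) • d) x = (f x / ρ) * ‖d‖ := by
        rw [dist_eq_norm]
        simp [norm_smul, abs_of_pos hfx, abs_of_pos hρ0]
      rw [mem_ball, this]
      calc (f x / ρ) * ‖d‖ < (f x / ρ) * ρ := by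
            exact mul_lt_mul_of_pos_left hdn (div_pos hfx hρ0)
      _ = f x := by field_simp
    have hw2 : y + (f y / ρ) • d ∈ Ω := by
      apply ball_subset' hΩo hΩb hΩne hn hy
      have : dist (y + (f y / ρ) • d) y = (f y / ρ) * ‖d‖ := by
        rw [dist_eq_norm]
        simp [norm_smul, abs_of_pos hfy, abs_of_pos hρ0]
      rw [mem_ball, this]
      calc (f y / ρ) * ‖d‖ < (f y / ρ) * ρ := by
            exact mul_lt_mul_of_pos_left hdn (div_pos hfy hρ0)
      _ = f y := by field_simp
    have hmem := hΩc hw1 hw2 ha hb hab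
    have hcomb : a • (x + (f x / ρ) • d) + b • (y + (f y / ρ) • d) = w := by
      have h1 : a • (x + (f x / ρ) • d) + b • (y + (f y / ρ) • d)
          = z + ((a * f x + b * f y) / ρ) • d := by
        rw [hz]; module
      rw [h1, ← hρ, div_self hρ0.ne', one_smul, hd]
      abel
    rwa [hcomb] at hmem
  apply le_infDist' (frontier_ne' hΩo hΩb hΩne hn)
  intro p hp
  by_contra hlt
  rw [not_le] at hlt
  have hpΩ : p ∈ Ω := hball (by rwa [mem_ball, dist_comm])
  have hmem2 : p ∈ Ω ∩ frontier Ω := ⟨hpΩ, hp⟩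
  rw [hΩo.inter_frontier_eq] at hmem2
  exact hmem2

end geom

theorem stmt_12 (n : ℕ) (hn : 2 ≤ n) (Ω : Set (EuclideanSpace ℝ (Fin n)))
    (hΩo : IsOpen Ω) (hΩb : Bornology.IsBounded Ω) (hΩc : Convex ℝ Ω)
    (hΩne : Ω.Nonempty) (Λ : ℝ) (hΛ : 0 < Λ)
    (v : EuclideanSpace ℝ (Fin n) → ℝ) (hv : v ∈ admissible Ω)
    (hmin : ∀ w ∈ admissible Ω, Jfun Ω Λ v ≤ Jfun Ω Λ w)
    (hlip : 1 / inradius Ω ≤ lipOn v (closure Ω)) :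
    {x ∈ Ω | 0 < v x} = Ω \ closure (innerParallel Ω (1 / lipOn v (closure Ω))) ∧
    Jfun Ω Λ v = lipOn v (closure Ω) +
      Λ * (volume (Ω \ closure (innerParallel Ω (1 / lipOn v (closure Ω))))).toReal := by
  classical
  have hfr : (frontier Ω).Nonempty := frontier_ne' hΩo hΩb hΩne hn
  -- inradius is positive
  have hR : 0 < inradius Ω := by
    obtain ⟨x₀, hx₀⟩ := id hΩne
    have hf0 : 0 < infDist x₀ (frontier Ω) := fpos' hΩo hΩb hΩne hn hx₀
    have hbdd : BddAbove ((fun x => infDist x (frontier Ω)) '' Ω) := by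
      obtain ⟨z₀, hz₀⟩ := hfr
      refine ⟨Metric.diam (closure Ω), ?_⟩
      rintro - ⟨x, hx, rfl⟩
      calc infDist x (frontier Ω) ≤ dist x z₀ := infDist_le_dist_of_mem hz₀
      _ ≤ Metric.diam (closure Ω) :=
          dist_le_diam_of_mem hΩb.closure (subset_closure hx) (frontier_subset_closure hz₀)
    exact hf0.trans_le (le_csSup hbdd ⟨x₀, hx₀, rfl⟩)
  set L := lipOn v (closure Ω) with hLdef
  have hL0 : 0 < L := lt_of_lt_of_le (by positivity) hlip
  set r := 1 / L with hrdef
  have hr0 : 0 < r := by positivity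
  have hLr : L * r = 1 := by rw [hrdef]; field_simp
  obtain ⟨hLnn, hvlip⟩ := lipOn_spec (u := v) (s := closure Ω) hv.1
  rw [← hLdef] at hvlip
  -- lower bound for v
  have hlow : ∀ x ∈ Ω, 1 - L * infDist x (frontier Ω) ≤ v x := by
    intro x hx
    obtain ⟨z, hzf, hzd⟩ := exists_mem_frontier_infDist_compl_eq_dist hx (ne_univ' hΩb hn)
    have hfxz : infDist x (frontier Ω) = dist x z := by
      rw [feq' hΩo hΩb hΩne hn hx]; exact hzd
    have h1 : |v x - v z| ≤ L * dist x z :=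
      hvlip x (subset_closure hx) z (frontier_subset_closure hzf)
    rw [← hfxz, hv.2.2 z hzf] at h1
    have := (abs_le.1 h1).1
    linarith
  have hpos_of_lt : ∀ x ∈ Ω, infDist x (frontier Ω) < r → 0 < v x := by
    intro x hx hfx
    have h1 := hlow x hx
    nlinarith
  set P := {x ∈ Ω | 0 < v x} with hPdef
  have hPsubΩ : P ⊆ Ω := fun x hx => hx.1
  have hPopen : IsOpen P := by
    rw [Metric.isOpen_iff]
    intro x hx
    obtain ⟨ε₁, hε₁, hb1⟩ := Metric.isOpen_iff.1 hΩo x hx.1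
    obtain ⟨hxΩ, hxv⟩ := hx
    have hL1 : (0:ℝ) < L + 1 := by linarith
    refine ⟨min ε₁ (v x / (L + 1)), lt_min hε₁ (div_pos hxv hL1), fun y hy => ?_⟩
    have hyΩ : y ∈ Ω := hb1 (mem_ball.2 (mem_ball.1 hy |>.trans_le (min_le_left _ _)))
    have habs : |v x - v y| ≤ L * dist x y :=
      hvlip x (subset_closure hxΩ) y (subset_closure hyΩ)
    have hd : dist y x < v x / (L + 1) := (mem_ball.1 hy).trans_le (min_le_right _ _)
    rw [dist_comm] at hd
    rw [lt_div_iff₀ hL1] at hd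
    have h5 := (abs_le.1 habs).2
    refine ⟨hyΩ, ?_⟩
    have hdist0 : (0:ℝ) ≤ dist x y := dist_nonneg
    nlinarith [hd, h5, hdist0]
  have hΩfin : volume Ω < ⊤ := hΩb.measure_lt_top
  by_cases hne : (innerParallel Ω r).Nonempty
  · -- main case
    have hIPopen : IsOpen (innerParallel Ω r) := by
      have : innerParallel Ω r = Ω ∩ (fun x => infDist x (frontier Ω)) ⁻¹' (Ioi r) := by
        ext x; simp [innerParallel, mem_preimage]
      rw [this]
      exact hΩo.inter (isOpen_Ioi.preimage (continuous_infDist_pt _))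
    have hclosub : closure (innerParallel Ω r) ⊆ {p : EuclideanSpace ℝ (Fin n) | r ≤ infDist p (frontier Ω)} := by
      apply closure_minimal
      · exact fun p hp => le_of_lt hp.2
      · exact isClosed_le continuous_const (continuous_infDist_pt _)
    have hDeq : Ω \ closure (innerParallel Ω r) = {x ∈ Ω | infDist x (frontier Ω) < r} := by
      apply Subset.antisymm
      · rintro x ⟨hxΩ, hxc⟩
        refine ⟨hxΩ, ?_⟩
        by_contra hge
        rw [not_lt] at hge
        apply hxc
        obtain ⟨y₀, hy₀Ω, hy₀f⟩ := hne
        rw [Metric.mem_closure_iff]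
        intro ε hε
        set t : ℝ := min (1/2) (ε / (dist x y₀ + 1)) with ht
        have hdxy : (0:ℝ) < dist x y₀ + 1 := by positivity
        have ht0 : 0 < t := lt_min (by norm_num) (by positivity)
        have ht1 : t ≤ 1/2 := min_le_left _ _
        refine ⟨(1 - t) • x + t • y₀, ⟨hΩc hxΩ hy₀Ω (by linarith) ht0.le (by ring), ?_⟩, ?_⟩
        · have hcon := f_concave' hΩo hΩb hΩc hΩne hn hxΩ hy₀Ω
            (a := 1 - t) (b := t) (by linarith) ht0.le (by ring)
          nlinarith [hcon]
        · have : dist x ((1 - t) • x + t • y₀) = t * dist x y₀ := by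
            rw [dist_eq_norm]
            have hxx : x - ((1 - t) • x + t • y₀) = t • (x - y₀) := by module
            rw [hxx, norm_smul, Real.norm_eq_abs, abs_of_pos ht0, ← dist_eq_norm]
          rw [this]
          calc t * dist x y₀ ≤ (ε / (dist x y₀ + 1)) * dist x y₀ := by
                exact mul_le_mul_of_nonneg_right (min_le_right _ _) dist_nonneg
          _ < ε := by
              rw [div_mul_eq_mul_div, div_lt_iff₀ hdxy]
              nlinarith [dist_nonneg (x := x) (y := y₀)]
      · rintro x ⟨hxΩ, hxlt⟩
        exact ⟨hxΩ, fun hc => absurd (hclosub hc) (not_le.2 hxlt)⟩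
    set D := Ω \ closure (innerParallel Ω r) with hDdef
    have hDopen : IsOpen D := hΩo.sdiff isClosed_closure
    have hDsubΩ : D ⊆ Ω := diff_subset
    have hDsubP : D ⊆ P := by
      rw [hDeq]
      rintro x ⟨hxΩ, hlt⟩
      exact ⟨hxΩ, hpos_of_lt x hxΩ hlt⟩
    -- competitor
    have hwb : ∀ x ∈ closure Ω, ∀ y ∈ closure Ω,
        |vfun Ω r x - vfun Ω r y| ≤ L * dist x y := by
      intro x _ y _
      have h1 : |vfun Ω r x - vfun Ω r y| ≤
          |(1 - infDist x (frontier Ω) / r) - (1 - infDist y (frontier Ω) / r)| :=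
        abs_max_sub_max_le_abs _ _ _
      have h2 : (1 - infDist x (frontier Ω) / r) - (1 - infDist y (frontier Ω) / r)
          = (infDist y (frontier Ω) - infDist x (frontier Ω)) / r := by ring
      have h3 : |infDist y (frontier Ω) - infDist x (frontier Ω)| ≤ dist x y := by
        have := (lipschitz_infDist_pt (frontier Ω)).dist_le_mul y x
        rw [Real.dist_eq] at this
        rw [dist_comm y x] at this
        simpa using this
      calc |vfun Ω r x - vfun Ω r y| ≤
          |(infDist y (frontier Ω) - infDist x (frontier Ω)) / r| := by rw [← h2]; exact h1
      _ = |infDist y (frontier Ω) - infDist x (frontier Ω)| / r := by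
          rw [abs_div, abs_of_pos hr0]
      _ ≤ dist x y / r := by
          gcongr
      _ = L * dist x y := by
          rw [hrdef]; field_simp
    have hwadm : vfun Ω r ∈ admissible Ω := by
      refine ⟨⟨L, hwb⟩, fun x _ => le_max_right _ _, fun x hx => ?_⟩
      simp [vfun, infDist_zero_of_mem hx]
    have hlipw : lipOn (vfun Ω r) (closure Ω) ≤ L := lipOn_le hL0.le hwb
    have hposw : {x ∈ Ω | 0 < vfun Ω r x} = D := by
      rw [hDeq]
      ext x
      simp only [vfun, mem_setOf_eq, lt_max_iff, lt_irrefl, or_false, sub_pos]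
      constructor
      · rintro ⟨hxΩ, hlt⟩
        exact ⟨hxΩ, by rwa [div_lt_one hr0] at hlt⟩
      · rintro ⟨hxΩ, hlt⟩
        exact ⟨hxΩ, by rwa [div_lt_one hr0]⟩
    have hJ := hmin _ hwadm
    unfold Jfun at hJ
    rw [hposw, ← hPdef, ← hLdef] at hJ
    have hvolR : (volume P).toReal ≤ (volume D).toReal := by
      have h1 : L + Λ * (volume P).toReal ≤ L + Λ * (volume D).toReal := by
        calc L + Λ * (volume P).toReal ≤
            lipOn (vfun Ω r) (closure Ω) + Λ * (volume D).toReal := hJ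
        _ ≤ L + Λ * (volume D).toReal := by linarith [hlipw]
      have h2 : Λ * (volume P).toReal ≤ Λ * (volume D).toReal := by linarith
      exact le_of_mul_le_mul_left h2 hΛ
    have hPfin : volume P ≠ ⊤ := ((measure_mono hPsubΩ).trans_lt hΩfin).ne
    have hDfin : volume D ≠ ⊤ := ((measure_mono hDsubΩ).trans_lt hΩfin).ne
    have hvol : volume P ≤ volume D := (ENNReal.toReal_le_toReal hPfin hDfin).1 hvolR
    have hPD : P = D := by
      apply Subset.antisymm _ hDsubP
      intro x hx
      by_contra hxD
      have hxc : x ∈ closure (innerParallel Ω r) := by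
        by_contra hxc
        exact hxD ⟨hx.1, hxc⟩
      obtain ⟨ε, hε, hball⟩ := Metric.isOpen_iff.1 hPopen x hx
      have hUne : (ball x ε ∩ innerParallel Ω r).Nonempty := by
        rw [Metric.mem_closure_iff] at hxc
        obtain ⟨y, hy, hd⟩ := hxc ε hε
        exact ⟨y, mem_ball.2 (by rwa [dist_comm]), hy⟩
      set U := ball x ε ∩ innerParallel Ω r with hU
      have hUopen : IsOpen U := isOpen_ball.inter hIPopen
      have hUsubP : U ⊆ P := fun y hy => hball hy.1
      have hdisj : Disjoint D U :=
        Set.disjoint_left.2 fun y hyD hyU => hyD.2 (subset_closure hyU.2)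
      have hUpos : 0 < volume U := hUopen.measure_pos volume hUne
      have hle : volume D + volume U ≤ volume D := by
        calc volume D + volume U = volume (D ∪ U) :=
            (measure_union hdisj hUopen.measurableSet).symm
        _ ≤ volume P := measure_mono (union_subset hDsubP hUsubP)
        _ ≤ volume D := hvol
      have : volume U ≤ 0 := by
        have := (ENNReal.add_le_add_iff_left hDfin).1
          (by simpa using hle : volume D + volume U ≤ volume D + 0)
        exact this
      exact absurd this (by simpa using hUpos.ne')
    refine ⟨hPD, ?_⟩
    unfold Jfun
    rw [← hPdef, ← hLdef, hPD]
  · -- degenerate case: impossible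
    exfalso
    have hemp : innerParallel Ω r = ∅ := not_nonempty_iff_eq_empty.1 hne
    have hfle : ∀ x ∈ Ω, infDist x (frontier Ω) ≤ r := by
      intro x hx
      by_contra h
      rw [not_le] at h
      have : x ∈ innerParallel Ω r := ⟨hx, h⟩
      rw [hemp] at this
      exact this
    set K := {x ∈ Ω | r ≤ infDist x (frontier Ω)} with hK
    have hKconv : Convex ℝ K := by
      rintro p ⟨hpΩ, hpr⟩ q ⟨hqΩ, hqr⟩ a b ha hb hab
      refine ⟨hΩc hpΩ hqΩ ha hb hab, ?_⟩
      have hcon := f_concave' hΩo hΩb hΩc hΩne hn hpΩ hqΩ ha hb hab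
      nlinarith
    have hKint : interior K = ∅ := by
      rw [eq_empty_iff_forall_notMem]
      intro x hxint
      obtain ⟨ε, hε, hballK⟩ := Metric.isOpen_iff.1 isOpen_interior x hxint
      have hxK : x ∈ K := interior_subset hxint
      have hfx : infDist x (frontier Ω) = r := le_antisymm (hfle x hxK.1) hxK.2
      obtain ⟨z, hzf, hzd⟩ := exists_mem_frontier_infDist_compl_eq_dist hxK.1 (ne_univ' hΩb hn)
      have hdxz : dist x z = r := by
        rw [← hfx, feq' hΩo hΩb hΩne hn hxK.1]; exact hzd.symm
      set δ : ℝ := min (ε/2) (r/2) with hδ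
      have hδ0 : 0 < δ := lt_min (by positivity) (by positivity)
      have hδr : δ ≤ r/2 := min_le_right _ _
      have hδε : δ < ε := (min_le_left _ _).trans_lt (by linarith)
      set y := x + (δ / r) • (z - x) with hy
      have hnzx : ‖z - x‖ = r := by rw [← dist_eq_norm, dist_comm]; exact hdxz
      have hyball : y ∈ ball x ε := by
        rw [mem_ball, hy, dist_eq_norm]
        have : x + (δ / r) • (z - x) - x = (δ / r) • (z - x) := by abel
        rw [this, norm_smul, Real.norm_eq_abs, abs_of_pos (div_pos hδ0 hr0), hnzx]
        calc δ / r * r = δ := by field_simp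
        _ < ε := hδε
      have hyK : y ∈ interior K := hballK hyball
      have hyr : r ≤ infDist y (frontier Ω) := (interior_subset hyK).2
      have hydist : infDist y (frontier Ω) ≤ dist y z := infDist_le_dist_of_mem hzf
      have hdyz : dist y z = r - δ := by
        rw [dist_eq_norm, hy]
        have hcomp : x + (δ / r) • (z - x) - z = (1 - δ / r) • (x - z) := by
          rw [smul_sub, sub_smul, one_smul, smul_sub]; abel
        rw [hcomp, norm_smul, Real.norm_eq_abs]
        have h1 : (0:ℝ) ≤ 1 - δ / r := by
          rw [sub_nonneg, div_le_one hr0]; linarith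
        have hnxz : ‖x - z‖ = r := by rw [← dist_eq_norm]; exact hdxz
        rw [abs_of_nonneg h1, hnxz]
        field_simp
      rw [hdyz] at hydist
      linarith
    have hK0 : volume K = 0 := by
      have hKfr : K ⊆ frontier K := by
        intro p hp
        rw [frontier, hKint, diff_empty]
        exact subset_closure hp
      refine le_antisymm ?_ zero_le
      calc volume K ≤ volume (frontier K) := measure_mono hKfr
      _ = 0 := hKconv.addHaar_frontier volume
    have hΩKset : {x ∈ Ω | infDist x (frontier Ω) < r} = Ω \ K := by
      ext x
      simp only [mem_setOf_eq, mem_diff, hK, not_and, not_le]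
      constructor
      · rintro ⟨h1, h2⟩; exact ⟨h1, fun _ => h2⟩
      · rintro ⟨h1, h2⟩; exact ⟨h1, h2 h1⟩
    have hΩK : volume {x ∈ Ω | infDist x (frontier Ω) < r} = volume Ω := by
      rw [hΩKset]; exact measure_diff_null hK0
    have hPvol : volume P = volume Ω := by
      apply le_antisymm (measure_mono hPsubΩ)
      rw [← hΩK]
      apply measure_mono
      rintro x ⟨hxΩ, hlt⟩
      exact ⟨hxΩ, hpos_of_lt x hxΩ hlt⟩
    have h1adm : (fun _ : EuclideanSpace ℝ (Fin n) => (1:ℝ)) ∈ admissible Ω :=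
      ⟨⟨0, by intro x _ y _; simp⟩, fun _ _ => zero_le_one, fun _ _ => rfl⟩
    have hlip1 : lipOn (fun _ : EuclideanSpace ℝ (Fin n) => (1:ℝ)) (closure Ω) = 0 := by
      apply le_antisymm
      · apply lipOn_le le_rfl
        intro x _ y _
        simp
      · exact (lipOn_spec ⟨0, by intro x _ y _; simp⟩).1
    have hJ1 := hmin _ h1adm
    unfold Jfun at hJ1
    rw [hlip1, ← hPdef, ← hLdef] at hJ1
    have hposone : {x ∈ Ω | (0:ℝ) < (fun _ : EuclideanSpace ℝ (Fin n) => (1:ℝ)) x} = Ω := by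
      ext x; simp
    rw [hposone] at hJ1
    rw [hPvol] at hJ1
    linarith
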